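/- arXiv:chao-dyn/9906036 — 3 statements merged into one kernel-verified Lean document; each statement's English description precedes it below -/
import Mathlib

section
/- Let (a_n) be a sequence of reals and C ≥ 0 a constant such that |a_n − a_{n₀} − a_{n−n₀}| ≤ C for all 0 < n₀ < n (i.e. a is approximately additive). Then the sequence a_n/n converges to some limit λ, and moreover |a_n/n − λ| ≤ C/n for all n ≥ 1. -/
open Filter

private lemma mul_bound (a : ℕ → ℝ) (C : ℝ) (hC : 0 ≤ C)
    (h : ∀ n n₀ : ℕ, 1 ≤ n₀ → n₀ < n → |a n - a n₀ - a (n - n₀)| ≤ C) :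
    ∀ m : ℕ, 1 ≤ m → ∀ n : ℕ, 1 ≤ n → |a (m*n) - m * a n| ≤ ((m:ℝ) - 1) * C := by
  intro m hm
  induction m, hm using Nat.le_induction with
  | base => intro n hn; simp
  | succ m hm ih =>
    intro n hn
    have hlt : n < (m+1)*n := by
      have := Nat.mul_lt_mul_of_pos_right (show 1 < m+1 by omega) (show 0 < n by omega)
      simpa using this
    have h1 : |a ((m+1)*n) - a n - a (m*n)| ≤ C := by
      have := h ((m+1)*n) n hn hlt
      have e : (m+1)*n - n = m*n := by rw [add_mul, one_mul, Nat.add_sub_cancel]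
      rwa [e] at this
    have h2 := ih n hn
    have key : a ((m+1)*n) - ((m:ℝ)+1) * a n
        = (a ((m+1)*n) - a n - a (m*n)) + (a (m*n) - m * a n) := by ring
    calc |a ((m+1)*n) - ((m+1:ℕ):ℝ) * a n|
        = |(a ((m+1)*n) - a n - a (m*n)) + (a (m*n) - m * a n)| := by
          push_cast; rw [key]
      _ ≤ |a ((m+1)*n) - a n - a (m*n)| + |a (m*n) - m * a n| := abs_add_le _ _
      _ ≤ C + ((m:ℝ) - 1) * C := add_le_add h1 h2
      _ = (((m+1:ℕ):ℝ) - 1) * C := by push_cast; ring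

private lemma cross_bound (a : ℕ → ℝ) (C : ℝ) (hC : 0 ≤ C)
    (h : ∀ n n₀ : ℕ, 1 ≤ n₀ → n₀ < n → |a n - a n₀ - a (n - n₀)| ≤ C) :
    ∀ n m : ℕ, 1 ≤ n → 1 ≤ m → |a n / n - a m / m| ≤ C / n + C / m := by
  intro n m hn hm
  have hn' : (0:ℝ) < n := by exact_mod_cast hn
  have hm' : (0:ℝ) < m := by exact_mod_cast hm
  have h1 := mul_bound a C hC h m hm n hn
  have h2 := mul_bound a C hC h n hn m hm
  have e : m * n = n * m := Nat.mul_comm m n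
  rw [e] at h1
  -- |m * a n - n * a m| ≤ ((m-1)+(n-1)) * C
  have h3 : |(m:ℝ) * a n - (n:ℝ) * a m| ≤ ((m:ℝ) - 1) * C + ((n:ℝ) - 1) * C := by
    have key : (m:ℝ) * a n - (n:ℝ) * a m
        = (a (n*m) - (n:ℝ) * a m) - (a (n*m) - (m:ℝ) * a n) := by ring
    rw [key]
    calc |(a (n*m) - (n:ℝ) * a m) - (a (n*m) - (m:ℝ) * a n)|
        ≤ |a (n*m) - (n:ℝ) * a m| + |a (n*m) - (m:ℝ) * a n| := abs_sub _ _
      _ ≤ ((n:ℝ) - 1) * C + ((m:ℝ) - 1) * C := add_le_add h2 h1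
      _ = ((m:ℝ) - 1) * C + ((n:ℝ) - 1) * C := by ring
  have e2 : a n / n - a m / m = ((m:ℝ) * a n - (n:ℝ) * a m) / (n * m) := by
    field_simp
  rw [e2, abs_div, abs_of_pos (by positivity : (0:ℝ) < (n:ℝ) * m)]
  rw [div_le_iff₀ (by positivity)]
  have hb := h3
  have hm1 : (1:ℝ) ≤ m := by exact_mod_cast hm
  have hn1 : (1:ℝ) ≤ n := by exact_mod_cast hn
  calc |(m:ℝ) * a n - (n:ℝ) * a m| ≤ ((m:ℝ) - 1) * C + ((n:ℝ) - 1) * C := h3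
    _ ≤ (C / n + C / m) * ((n:ℝ) * m) := by
        have e3 : (C / (n:ℝ) + C / (m:ℝ)) * ((n:ℝ) * m) = C * m + C * n := by
          field_simp
        rw [e3]
        nlinarith

theorem approx_additive_limit (a : ℕ → ℝ) (C : ℝ) (hC : 0 ≤ C)
    (h : ∀ n n₀ : ℕ, 1 ≤ n₀ → n₀ < n → |a n - a n₀ - a (n - n₀)| ≤ C) :
    ∃ lam : ℝ, Filter.Tendsto (fun n : ℕ => a n / n) Filter.atTop (nhds lam) ∧
      ∀ n : ℕ, 1 ≤ n → |a n / n - lam| ≤ C / n := by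
  set s : ℕ → ℝ := fun k => a (k+1) / (k+1) with hs
  have hcauchy : CauchySeq s := by
    refine cauchySeq_of_le_tendsto_0 (fun N => 2 * C / (N+1)) ?_ ?_
    · intro n m N hn hm
      have key := cross_bound a C hC h (n+1) (m+1) (by omega) (by omega)
      rw [Real.dist_eq]
      have b1 : C / ((n:ℝ)+1) ≤ C / ((N:ℝ)+1) := by
        apply div_le_div_of_nonneg_left hC (by positivity)
        push_cast; linarith [(Nat.cast_le (α := ℝ)).mpr hn]
      have b2 : C / ((m:ℝ)+1) ≤ C / ((N:ℝ)+1) := by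
        apply div_le_div_of_nonneg_left hC (by positivity)
        push_cast; linarith [(Nat.cast_le (α := ℝ)).mpr hm]
      have : |s n - s m| ≤ C / ((n:ℝ)+1) + C / ((m:ℝ)+1) := by
        simp only [hs]
        push_cast
        convert key using 3 <;> push_cast <;> ring
      calc |s n - s m| ≤ C / ((n:ℝ)+1) + C / ((m:ℝ)+1) := this
        _ ≤ C / ((N:ℝ)+1) + C / ((N:ℝ)+1) := add_le_add b1 b2
        _ = 2 * C / ((N:ℝ)+1) := by ring
    · have : Tendsto (fun N : ℕ => 2 * C / ((N:ℝ)+1)) atTop (nhds 0) := by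
        apply Tendsto.div_atTop tendsto_const_nhds
        exact tendsto_atTop_add_const_right _ 1 tendsto_natCast_atTop_atTop
      simpa using this
  obtain ⟨lam, hlam⟩ := cauchySeq_tendsto_of_complete hcauchy
  refine ⟨lam, ?_, ?_⟩
  · have : Tendsto (fun n : ℕ => a (n+1) / ((n+1:ℕ):ℝ)) atTop (nhds lam) := by
      simpa [hs] using hlam
    exact (tendsto_add_atTop_iff_nat 1).mp (by simpa using this)
  · intro n hn
    have hb' : ∀ m : ℕ, |a n / n - s m| ≤ C / n + C / ((m:ℝ)+1) := fun m => by
      simpa [hs, Nat.cast_add, Nat.cast_one] using cross_bound a C hC h n (m+1) hn (by omega)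
    have hlim1 : Tendsto (fun m : ℕ => |a n / n - s m|) atTop (nhds (|a n / n - lam|)) :=
      (Tendsto.const_sub _ hlam).abs
    have hlim2 : Tendsto (fun m : ℕ => C / n + C / ((m:ℝ)+1)) atTop (nhds (C / n + 0)) := by
      apply Tendsto.const_add
      apply Tendsto.div_atTop tendsto_const_nhds
      exact tendsto_atTop_add_const_right _ 1 tendsto_natCast_atTop_atTop
    have := le_of_tendsto_of_tendsto' hlim1 hlim2 hb'
    simpa using this
end

section
/- Let T : α → α be a continuous map of a nonempty compact topological space α. Then there exists a nonempty closed subset M ⊆ α with T(M) = M that is minimal: no proper nonempty closed subset M' ⊊ M satisfies T(M') = M'. (Birkhoff's minimal set theorem.) -/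
theorem birkhoff_minimal_set {α : Type*} [TopologicalSpace α] [CompactSpace α]
    [T2Space α] [Nonempty α] (T : α → α) (hT : Continuous T) :
    ∃ M : Set α, M.Nonempty ∧ IsClosed M ∧ T '' M = M ∧
      ∀ M' : Set α, M' ⊆ M → M'.Nonempty → IsClosed M' → T '' M' = M' → M' = M := by
  set S : Set (Set α) := {M | M.Nonempty ∧ IsClosed M ∧ T '' M ⊆ M} with hS
  have hchaincond : ∀ c ⊆ S, IsChain (· ⊆ ·) c → c.Nonempty →
      ∃ lb ∈ S, ∀ s ∈ c, lb ⊆ s := by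
    intro c hcS hchain hcne
    haveI : Nonempty c := hcne.to_subtype
    have hdir : DirectedOn (· ⊇ ·) c := fun U hU V hV =>
      (hchain.total hU hV).elim (fun h => ⟨U, hU, subset_rfl, h⟩)
        (fun h => ⟨V, hV, h, subset_rfl⟩)
    refine ⟨⋂₀ c, ⟨?_, ?_, ?_⟩, fun s hs => Set.sInter_subset_of_mem hs⟩
    · exact IsCompact.nonempty_sInter_of_directed_nonempty_isCompact_isClosed
        hdir
        (fun U hU => (hcS hU).1) (fun U hU => (hcS hU).2.1.isCompact)
        (fun U hU => (hcS hU).2.1)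
    · exact isClosed_sInter fun U hU => (hcS hU).2.1
    · intro x hx
      simp only [Set.mem_image, Set.mem_sInter] at hx ⊢
      obtain ⟨y, hy, rfl⟩ := hx
      exact fun U hU => (hcS hU).2.2 ⟨y, hy U hU, rfl⟩
  obtain ⟨M, -, hMS, hMmin⟩ := zorn_superset_nonempty S hchaincond Set.univ
    ⟨Set.univ_nonempty, isClosed_univ, Set.subset_univ _⟩
  obtain ⟨hMne, hMcl, hMinv⟩ := hMS
  have himg : T '' M ∈ S :=
    ⟨hMne.image T, (hMcl.isCompact.image hT).isClosed,
      Set.image_mono (f := T) hMinv⟩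
  have hTM : T '' M = M := subset_antisymm hMinv (hMmin himg hMinv)
  refine ⟨M, hMne, hMcl, hTM, fun M' hsub hne hcl hinv => ?_⟩
  exact subset_antisymm hsub (hMmin ⟨hne, hcl, hinv.le⟩ hsub)
end

section
/- Let f : ℝ → ℝ be strictly increasing with f(x+1) = f(x)+1, and suppose sequences xₙ, yₙ satisfy xₙ₊₁ = f(xₙ), yₙ₊₁ = f(yₙ). If both limits limₙ (xₙ − x₀)/n and limₙ (yₙ − y₀)/n exist, they are equal. -/
theorem rotation_number_unique (f : ℝ → ℝ) (hmono : StrictMono f)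
    (hper : ∀ x, f (x + 1) = f x + 1)
    (x y : ℕ → ℝ) (hx : ∀ n, x (n + 1) = f (x n)) (hy : ∀ n, y (n + 1) = f (y n))
    (ω₁ ω₂ : ℝ)
    (h₁ : Filter.Tendsto (fun n : ℕ => (x n - x 0) / n) Filter.atTop (nhds ω₁))
    (h₂ : Filter.Tendsto (fun n : ℕ => (y n - y 0) / n) Filter.atTop (nhds ω₂)) :
    ω₁ = ω₂ := by
  have fz : ∀ (z : ℤ) (t : ℝ), f (t + z) = f t + z := by
    intro z
    induction z using Int.induction_on with
    | zero => simp
    | succ n ih =>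
      intro t
      have := hper (t + n)
      push_cast
      push_cast at ih
      rw [← add_assoc, this, ih]
      ring
    | pred n ih =>
      intro t
      have h := hper (t + (-(n:ℝ) - 1))
      push_cast
      push_cast at ih
      have h2 : t + (-(n:ℝ) - 1) + 1 = t + -(n:ℝ) := by ring
      rw [h2] at h
      have : f (t + -(n:ℝ)) = f t + -(n:ℝ) := ih t
      rw [this] at h
      linarith [h]
  set p : ℤ := ⌈x 0 - y 0⌉ with hp
  have hp1 : x 0 ≤ y 0 + p := by
    have := Int.le_ceil (x 0 - y 0)
    linarith
  have hp2 : y 0 + p ≤ x 0 + 1 := by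
    have := Int.ceil_lt_add_one (x 0 - y 0)
    linarith
  have key : ∀ n, x n ≤ y n + p ∧ y n + p ≤ x n + 1 := by
    intro n
    induction n with
    | zero => exact ⟨hp1, hp2⟩
    | succ n ih =>
      constructor
      · rw [hx, hy, ← fz p (y n)]
        exact hmono.monotone ih.1
      · rw [hx, hy, ← fz p (y n), ← hper (x n)]
        exact hmono.monotone ih.2
  have hzero : Filter.Tendsto (fun n : ℕ => (x n - x 0) / n - (y n - y 0) / n)
      Filter.atTop (nhds 0) := by
    refine squeeze_zero_norm (a := fun n : ℕ => 1 / (n : ℝ)) (fun n => ?_) tendsto_one_div_atTop_nhds_zero_nat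
    · rcases Nat.eq_zero_or_pos n with h0 | h0
      · subst h0; simp
      have hn : (0:ℝ) < n := by exact_mod_cast h0
      have e : (x n - x 0) / n - (y n - y 0) / n
          = ((x n - (y n + p)) - (x 0 - (y 0 + p))) / n := by
        field_simp
        ring
      rw [e, norm_div, Real.norm_natCast, div_le_div_iff₀ (by positivity) hn, one_mul]
      have k1 := (key n).1
      have k2 := (key n).2
      have hb : |x n - (y n + (p:ℝ)) - (x 0 - (y 0 + (p:ℝ)))| ≤ 1 := by
        rw [abs_le]; constructor <;> nlinarith [hp1, hp2]
      rw [Real.norm_eq_abs]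
      nlinarith [mul_le_mul_of_nonneg_right hb hn.le]
  have := tendsto_nhds_unique (h₁.sub h₂) hzero
  linarith [this]
end
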